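/- Let R be a two-sided Noetherian ring and let 0 → L → M → N → 0 be a short exact sequence of finitely generated R-modules with Hom_R(L, R) = 0. Then Ω Tr M and Ω Tr N are stably isomorphic: there exist finitely generated projective modules P, Q with Ω Tr M ⊕ P ≅ Ω Tr N ⊕ Q. -/

import Mathlib

open CategoryTheory IsLocalRing

universe u

noncomputable section

variable (R : Type u) [CommRing R]

/-- `Ext^i_R(M, N)` is trivial. -/
def extVanish (M N : ModuleCat.{u} R) (i : ℕ) : Prop :=
  Subsingleton (((Ext R (ModuleCat.{u} R) i).obj (Opposite.op M)).obj N)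

/-- The `I`-torsion submodule `Γ_I(M) = {x | I^n x = 0 for some n}`. -/
def torsionGamma (I : Ideal R) (M : Type u) [AddCommGroup M] [Module R M] : Submodule R M :=
  ⨆ n : ℕ, Submodule.torsionBySet R M ((I ^ n : Ideal R) : Set R)

/-- The `i`-th local cohomology of `M` with support in the maximal ideal vanishes. -/
def lcVanish [IsLocalRing R] (M : ModuleCat.{u} R) (i : ℕ) : Prop :=
  Subsingleton ((localCohomology (maximalIdeal R) i).obj M)

/-- `M` is maximal Cohen–Macaulay: `H^i_m(M) = 0` for all `i < dim R`. -/
def IsMCM [IsLocalRing R] (M : ModuleCat.{u} R) : Prop :=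
  ∀ i : ℕ, (i : WithBot (WithTop ℕ)) < ringKrullDim R → lcVanish R M i

/-- `R` is a Cohen–Macaulay local ring. -/
def IsCMLocalRing [IsLocalRing R] : Prop :=
  IsNoetherianRing R ∧ IsMCM R (ModuleCat.of R R)

/-- `K` is a (first) syzygy of `M`. -/
def IsSyzygyOf (K M : ModuleCat.{u} R) : Prop :=
  ∃ (P : ModuleCat.{u} R) (f : P →ₗ[R] M), Module.Projective R P ∧ Module.Finite R P ∧
    Function.Surjective f ∧ Nonempty (K ≃ₗ[R] LinearMap.ker f)

/-- `K` is an `n`-th syzygy of `M`. -/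
def IsNthSyzygyOf : ℕ → ModuleCat.{u} R → ModuleCat.{u} R → Prop
  | 0, K, M => Nonempty (K ≃ₗ[R] M)
  | n + 1, K, M => ∃ N : ModuleCat.{u} R, IsSyzygyOf R N M ∧ IsNthSyzygyOf n K N

/-- `T` is an (Auslander) transpose of `M`. -/
def IsTransposeOf (T M : ModuleCat.{u} R) : Prop :=
  ∃ (P₁ P₀ : ModuleCat.{u} R) (d₁ : P₁ →ₗ[R] P₀) (d₀ : P₀ →ₗ[R] M),
    Module.Projective R P₁ ∧ Module.Finite R P₁ ∧ Module.Projective R P₀ ∧ Module.Finite R P₀ ∧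
    Function.Surjective d₀ ∧ LinearMap.range d₁ = LinearMap.ker d₀ ∧
    Nonempty (T ≃ₗ[R] (Module.Dual R P₁ ⧸ LinearMap.range d₁.dualMap))

/-- Two modules are stably isomorphic. -/
def StablyIso (M N : Type u) [AddCommGroup M] [Module R M] [AddCommGroup N] [Module R N] : Prop :=
  ∃ (P Q : ModuleCat.{u} R), Module.Projective R P ∧ Module.Finite R P ∧
    Module.Projective R Q ∧ Module.Finite R Q ∧ Nonempty ((M × P) ≃ₗ[R] (N × Q))

/-- `M` has a resolution of length `n` by finitely generated projective modules. -/
def HasProjResolLength : ℕ → ModuleCat.{u} R → Prop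
  | 0, M => Module.Projective R M ∧ Module.Finite R M
  | n + 1, M => ∃ (P : ModuleCat.{u} R) (f : P →ₗ[R] M), Module.Projective R P ∧
      Module.Finite R P ∧ Function.Surjective f ∧
      HasProjResolLength n (ModuleCat.of R (LinearMap.ker f))

/-- `M` is totally reflexive (Gorenstein projective). -/
def IsTotReflexive (M : ModuleCat.{u} R) : Prop :=
  Function.Bijective (Module.Dual.eval R M) ∧
  (∀ i : ℕ, 0 < i → extVanish R M (ModuleCat.of R R) i) ∧
  (∀ T : ModuleCat.{u} R, IsTransposeOf R T M →
    ∀ i : ℕ, 0 < i → extVanish R T (ModuleCat.of R R) i)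

/-- `M` has a resolution of length `n` by totally reflexive modules. -/
def HasGResolLength : ℕ → ModuleCat.{u} R → Prop
  | 0, M => IsTotReflexive R M
  | n + 1, M => ∃ (X : ModuleCat.{u} R) (f : X →ₗ[R] M), IsTotReflexive R X ∧
      Function.Surjective f ∧ HasGResolLength n (ModuleCat.of R (LinearMap.ker f))

/-- `R` is a Gorenstein local ring. -/
def IsGorensteinLocal [IsLocalRing R] : Prop :=
  IsNoetherianRing R ∧ ∃ d : ℕ, ringKrullDim R = (d : ℕ) ∧
    (∀ i : ℕ, i ≠ d → extVanish R (ModuleCat.of R (ResidueField R)) (ModuleCat.of R R) i) ∧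
    Nonempty ((((Ext R (ModuleCat.{u} R) d).obj
      (Opposite.op (ModuleCat.of R (ResidueField R)))).obj (ModuleCat.of R R)) ≃ₗ[R]
        ResidueField R)

/-- `R` is a regular local ring. -/
def IsRegularLocal [IsLocalRing R] : Prop :=
  IsNoetherianRing R ∧ ∃ s : Finset R, Ideal.span (s : Set R) = maximalIdeal R ∧
    (s.card : WithBot (WithTop ℕ)) = ringKrullDim R

end


/-!
Fix a presentation `P₁ →d₁ P₀ →d₀ M → 0`, so that `Tr M = coker d₁*`. Since dualising is left
exact, `ker d₁* = im d₀*`, and Schanuel's lemma applied to `Q ↠ Tr M` and `P₁* ↠ Tr M` shows that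
`Ω Tr M` is stably isomorphic to `coker (d₀* : M* → P₀*)`. Up to stable isomorphism this cokernel
only depends on the target of the surjection `d₀`: for surjections `d : P ↠ X`, `d' : P' ↠ X` from
projectives, `(d, d')` and `(d, 0)` differ by an automorphism of `P ⊕ P'`, whence
`coker d* ⊕ P'* ≅ coker d'* ⊕ P*`. Finally `L* = 0` makes `g* : N* → M*` surjective, so
`coker (g d₀)* = coker d₀*`, while `g d₀ : P₀ ↠ N` is also a surjection onto `N`.
-/

open Module LinearMap Function

section

variable {R X P P' : Type*} [CommRing R] [AddCommGroup X] [Module R X]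
  [AddCommGroup P] [Module R P] [AddCommGroup P'] [Module R P']

abbrev dualCoker (d : P →ₗ[R] X) : Type _ := Dual R P ⧸ range d.dualMap

theorem coprod_comp_prodComm (d : P →ₗ[R] X) (d' : P' →ₗ[R] X) :
    d'.coprod d ∘ₗ (LinearEquiv.prodComm R P P').toLinearMap = d.coprod d' := by
  ext <;> simp

def kerEquivOfCompEq (e : P ≃ₗ[R] P') {d : P →ₗ[R] X} {d' : P' →ₗ[R] X}
    (h : d' ∘ₗ e.toLinearMap = d) : ker d ≃ₗ[R] ker d' :=
  e.ofSubmodules _ _ (by rw [← h, ker_comp, Submodule.map_comap_eq_of_surjective e.surjective])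

def dualCokerEquivOfCompEq (e : P ≃ₗ[R] P') {d : P →ₗ[R] X} {d' : P' →ₗ[R] X}
    (h : d' ∘ₗ e.toLinearMap = d) : dualCoker d ≃ₗ[R] dualCoker d' :=
  Submodule.Quotient.equiv _ _ e.symm.dualMap (by
    rw [← h, ← dualMap_comp_dualMap, ← range_comp]
    congr 1
    ext φ x
    simp)

theorem nonempty_ker_coprod_equiv [Module.Projective R P'] {d : P →ₗ[R] X} (d' : P' →ₗ[R] X)
    (hd : Surjective d) : Nonempty (ker (d.coprod d') ≃ₗ[R] ker d × P') := by
  obtain ⟨h, hh⟩ := Module.projective_lifting_property d d' hd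
  have hh' : ∀ p', d (h p') = d' p' := LinearMap.congr_fun hh
  exact ⟨{
    toFun x := (⟨x.1.1 + h x.1.2, by rw [mem_ker, map_add, hh']; exact mem_ker.mp x.2⟩, x.1.2)
    invFun y := ⟨(y.1 - h y.2, y.2), by
      rw [mem_ker, coprod_apply, map_sub, hh', sub_add_cancel]; exact mem_ker.mp y.1.2⟩
    map_add' x y := by ext <;> simp; abel
    map_smul' c x := by ext <;> simp
    left_inv x := by ext <;> simp
    right_inv y := by ext <;> simp }⟩

theorem nonempty_dualCoker_coprod_equiv [Module.Projective R P'] {d : P →ₗ[R] X}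
    (d' : P' →ₗ[R] X) (hd : Surjective d) :
    Nonempty (dualCoker (d.coprod d') ≃ₗ[R] dualCoker d × Dual R P') := by
  obtain ⟨h, hh⟩ := Module.projective_lifting_property d d' hd
  -- `θ φ` is `φ ∘ α⁻¹` for the shear `α (p, p') = (p + h p', p')`, its `P`-part taken mod `im d*`.
  let θ : Dual R (P × P') →ₗ[R] dualCoker d × Dual R P' :=
    ((range d.dualMap).mkQ ∘ₗ (inl R P P').dualMap).prod
      ((inr R P P').dualMap - h.dualMap ∘ₗ (inl R P P').dualMap)
  have hθ : Surjective θ := by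
    rintro ⟨c, χ⟩
    obtain ⟨ψ, rfl⟩ := Submodule.mkQ_surjective _ c
    refine ⟨ψ.coprod (χ + ψ ∘ₗ h), ?_⟩
    refine Prod.ext (congrArg Submodule.Quotient.mk ?_) ?_ <;> ext <;> simp [θ]
  have hker : ker θ = range (d.coprod d').dualMap := by
    ext φ
    simp only [θ, ker_prod, Submodule.mem_inf, mem_ker, coe_comp, Function.comp_apply,
      Submodule.mkQ_apply, Submodule.Quotient.mk_eq_zero, mem_range, LinearMap.sub_apply,
      sub_eq_zero]
    constructor
    · rintro ⟨⟨ψ, hψ⟩, hφ⟩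
      refine ⟨ψ, ?_⟩
      ext p
      · simpa using LinearMap.congr_fun hψ p
      · simpa [← hh, ← LinearMap.congr_fun hψ] using (LinearMap.congr_fun hφ p).symm
    · rintro ⟨ψ, rfl⟩
      refine ⟨⟨ψ, ?_⟩, ?_⟩ <;> ext <;> simp [← hh]
  exact ⟨(Submodule.quotEquivOfEq _ _ hker.symm).trans (θ.quotKerEquivOfSurjective hθ)⟩

theorem nonempty_ker_prod_equiv_of_surjective [Module.Projective R P] [Module.Projective R P']
    {d : P →ₗ[R] X} {d' : P' →ₗ[R] X} (hd : Surjective d) (hd' : Surjective d') :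
    Nonempty ((ker d × P') ≃ₗ[R] (ker d' × P)) := by
  obtain ⟨e⟩ := nonempty_ker_coprod_equiv d' hd
  obtain ⟨e'⟩ := nonempty_ker_coprod_equiv d hd'
  exact ⟨e.symm ≪≫ₗ kerEquivOfCompEq _ (coprod_comp_prodComm d d') ≪≫ₗ e'⟩

theorem nonempty_dualCoker_prod_equiv_of_surjective [Module.Projective R P]
    [Module.Projective R P'] {d : P →ₗ[R] X} {d' : P' →ₗ[R] X} (hd : Surjective d)
    (hd' : Surjective d') :
    Nonempty ((dualCoker d × Dual R P') ≃ₗ[R] (dualCoker d' × Dual R P)) := by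
  obtain ⟨e⟩ := nonempty_dualCoker_coprod_equiv d' hd
  obtain ⟨e'⟩ := nonempty_dualCoker_coprod_equiv d hd'
  exact ⟨e.symm ≪≫ₗ dualCokerEquivOfCompEq _ (coprod_comp_prodComm d d') ≪≫ₗ e'⟩

end

section

variable {R M₀ M₁ M₂ : Type*} [CommRing R] [AddCommGroup M₀] [Module R M₀]
  [AddCommGroup M₁] [Module R M₁] [AddCommGroup M₂] [Module R M₂]

theorem ker_dualMap_eq_range_dualMap {d₁ : M₀ →ₗ[R] M₁} {d₀ : M₁ →ₗ[R] M₂}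
    (hex : range d₁ = ker d₀) (hd₀ : Surjective d₀) :
    ker d₁.dualMap = range d₀.dualMap := by
  rw [ker_dualMap_eq_dualAnnihilator_range, hex,
    range_dualMap_eq_dualAnnihilator_ker_of_surjective d₀ hd₀]

theorem dualMap_surjective_of_range_eq_ker [Subsingleton (Dual R M₀)] {f : M₀ →ₗ[R] M₁}
    {g : M₁ →ₗ[R] M₂} (hfg : range f = ker g) (hg : Surjective g) :
    Surjective g.dualMap := by
  rw [← range_eq_top, ← ker_dualMap_eq_range_dualMap hfg hg, eq_top_iff]
  exact fun _ _ ↦ Subsingleton.elim _ _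

end

namespace StablyIso

variable {R A B C : Type u} [CommRing R] [AddCommGroup A] [Module R A]
  [AddCommGroup B] [Module R B] [AddCommGroup C] [Module R C]

theorem of_prod_equiv {P Q : Type u} [AddCommGroup P] [Module R P] [AddCommGroup Q] [Module R Q]
    [Module.Projective R P] [Module.Finite R P] [Module.Projective R Q] [Module.Finite R Q]
    (e : (A × P) ≃ₗ[R] (B × Q)) : StablyIso R A B :=
  ⟨.of R P, .of R Q, ‹_›, ‹_›, ‹_›, ‹_›, ⟨e⟩⟩

theorem of_linearEquiv (e : A ≃ₗ[R] B) : StablyIso R A B :=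
  of_prod_equiv (P := PUnit) (Q := PUnit) (e.prodCongr (.refl R _))

theorem symm : StablyIso R A B → StablyIso R B A
  | ⟨_, _, _, _, _, _, ⟨e⟩⟩ => of_prod_equiv e.symm

theorem trans : StablyIso R A B → StablyIso R B C → StablyIso R A C
  | ⟨P, Q, _, _, _, _, ⟨e⟩⟩, ⟨P', Q', _, _, _, _, ⟨e'⟩⟩ =>
    of_prod_equiv <|
      (LinearEquiv.prodAssoc R A P P').symm ≪≫ₗ e.prodCongr (.refl R P') ≪≫ₗ
      LinearEquiv.prodAssoc R B Q P' ≪≫ₗ (LinearEquiv.refl R B).prodCongr (.prodComm R Q P') ≪≫ₗ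
      (LinearEquiv.prodAssoc R B P' Q).symm ≪≫ₗ e'.prodCongr (.refl R Q) ≪≫ₗ
      LinearEquiv.prodAssoc R C Q' Q

end StablyIso

section

variable {R : Type u} [CommRing R]

theorem nonempty_ker_prod_dual_equiv_dualCoker {P₁ P₀ M Q : Type u} [AddCommGroup P₁]
    [Module R P₁] [AddCommGroup P₀] [Module R P₀] [AddCommGroup M] [Module R M]
    [AddCommGroup Q] [Module R Q] [Module.Projective R P₁] [Module.Finite R P₁]
    [Module.Projective R Q] {d₁ : P₁ →ₗ[R] P₀} {d₀ : P₀ →ₗ[R] M} (hex : range d₁ = ker d₀)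
    (hd₀ : Surjective d₀) {q : Q →ₗ[R] dualCoker d₁} (hq : Surjective q) :
    Nonempty ((ker q × Dual R P₁) ≃ₗ[R] (dualCoker d₀ × Q)) := by
  obtain ⟨e⟩ := nonempty_ker_prod_equiv_of_surjective hq (range d₁.dualMap).mkQ_surjective
  have eK : ker (range d₁.dualMap).mkQ ≃ₗ[R] dualCoker d₀ :=
    LinearEquiv.ofEq _ _ (Submodule.ker_mkQ _) ≪≫ₗ d₁.dualMap.quotKerEquivRange.symm ≪≫ₗ
      Submodule.quotEquivOfEq _ _ (ker_dualMap_eq_range_dualMap hex hd₀)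
  exact ⟨e ≪≫ₗ eK.prodCongr (.refl R Q)⟩

theorem IsSyzygyOf.exists_stablyIso_dualCoker {T M K : ModuleCat.{u} R}
    (hT : IsTransposeOf R T M) (hK : IsSyzygyOf R K T) :
    ∃ (P₀ : ModuleCat.{u} R) (d₀ : P₀ →ₗ[R] M), Module.Projective R P₀ ∧ Module.Finite R P₀ ∧
      Surjective d₀ ∧ StablyIso R K (dualCoker d₀) := by
  obtain ⟨P₁, P₀, d₁, d₀, _, _, _, _, hd₀, hex, ⟨eT⟩⟩ := hT
  obtain ⟨Q, q, _, _, hq, ⟨eK⟩⟩ := hK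
  obtain ⟨e⟩ := nonempty_ker_prod_dual_equiv_dualCoker hex hd₀
    (q := eT.toLinearMap ∘ₗ q) (eT.surjective.comp hq)
  have eK' : K ≃ₗ[R] ker (eT.toLinearMap ∘ₗ q) := eK ≪≫ₗ .ofEq _ _ (eT.ker_comp q).symm
  exact ⟨P₀, d₀, ‹_›, ‹_›, hd₀, .of_prod_equiv (eK'.prodCongr (.refl _ _) ≪≫ₗ e)⟩

theorem stablyIso_dualCoker_of_dualMap_surjective {P P' M N : Type u} [AddCommGroup P]
    [Module R P] [AddCommGroup P'] [Module R P'] [AddCommGroup M] [Module R M]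
    [AddCommGroup N] [Module R N] [Module.Projective R P] [Module.Finite R P]
    [Module.Projective R P'] [Module.Finite R P'] {d : P →ₗ[R] M} {d' : P' →ₗ[R] N}
    {g : M →ₗ[R] N} (hd : Surjective d) (hd' : Surjective d') (hg : Surjective g)
    (hg' : Surjective g.dualMap) : StablyIso R (dualCoker d) (dualCoker d') := by
  have hrange : range (g ∘ₗ d).dualMap = range d.dualMap := by
    rw [← dualMap_comp_dualMap, range_comp, range_eq_top.mpr hg', Submodule.map_top]
  obtain ⟨e⟩ := nonempty_dualCoker_prod_equiv_of_surjective
    (d := g ∘ₗ d) (hg.comp hd) hd'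
  exact (StablyIso.of_linearEquiv (Submodule.quotEquivOfEq _ _ hrange.symm)).trans
    (.of_prod_equiv e)

end

theorem stmt_13_general (R : Type u) [CommRing R]
    (L M N : ModuleCat.{u} R)
    (f : L →ₗ[R] M) (g : M →ₗ[R] N)
    (hg : Function.Surjective g)
    (hfg : LinearMap.range f = LinearMap.ker g)
    (hL : Subsingleton (Module.Dual R L)) :
    ∀ (TM TN KM KN : ModuleCat.{u} R),
      IsTransposeOf R TM M → IsSyzygyOf R KM TM →
      IsTransposeOf R TN N → IsSyzygyOf R KN TN →
      StablyIso R KM KN := by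
  intro TM TN KM KN hTM hKM hTN hKN
  obtain ⟨P, d, _, _, hd, hKM⟩ := hKM.exists_stablyIso_dualCoker hTM
  obtain ⟨P', d', _, _, hd', hKN⟩ := hKN.exists_stablyIso_dualCoker hTN
  have hg' : Surjective g.dualMap := dualMap_surjective_of_range_eq_ker hfg hg
  exact hKM.trans ((stablyIso_dualCoker_of_dualMap_surjective hd hd' hg hg').trans hKN.symm)

theorem stmt_13 (R : Type u) [CommRing R] [IsNoetherianRing R]
    (L M N : ModuleCat.{u} R) [Module.Finite R L] [Module.Finite R M] [Module.Finite R N]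
    (f : L →ₗ[R] M) (g : M →ₗ[R] N)
    (hf : Function.Injective f) (hg : Function.Surjective g)
    (hfg : LinearMap.range f = LinearMap.ker g)
    (hL : Subsingleton (Module.Dual R L)) :
    ∀ (TM TN KM KN : ModuleCat.{u} R),
      IsTransposeOf R TM M → IsSyzygyOf R KM TM →
      IsTransposeOf R TN N → IsSyzygyOf R KN TN →
      StablyIso R KM KN :=
  stmt_13_general R L M N f g hg hfg hL
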